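/- arXiv:1604.03815 — 2 statements merged into one kernel-verified Lean document; each statement's English description precedes it below -/
import Mathlib

section
/- Let μ be a finite measure on the unit sphere S² ⊆ ℝ³ that is central symmetric (invariant under n ↦ -n) with μ(S²) = 1. Fix a unit vector n₀ and a measurable function g : S² → [0,1]. Suppose λ ∈ (0,1] satisfies ∫ [1_{n₀·n > λ}(n) + g(n)·1_{n₀·n = λ}(n)] dμ(n) = 1/2. Then the measure μ restricted to the set {n : 0 < n₀·n < λ} is zero, μ assigns measure zero weighted by (1 - g) to {n₀·n = λ}, and weighted by g to {n₀·n = 0}; consequently ∫ [1_{n₀·n > 0}(n) + g(n)·1_{n₀·n = 0}(n)] n dμ(n) = ∫ [1_{n₀·n > λ}(n) + g(n)·1_{n₀·n = λ}(n)] n dμ(n). -/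
open MeasureTheory RealInnerProductSpace

/-!
Write `φ n = ⟪n₀, n⟫`. Central symmetry gives `μ {φ < 0} = μ {φ > 0}`, so `μ {φ > 0} ≤ 1/2`.
Since `λ > 0` and `0 ≤ g ≤ 1`, the weight `1_{φ > λ} + g 1_{φ = λ}` lies below `1_{φ > 0}`, with
gap `1_{0 < φ < λ} + (1 - g) 1_{φ = λ} ≥ 0`. Its mass is `1/2 ≥ μ {φ > 0}`, so the gap vanishes
a.e. and `μ {φ > 0} = 1/2`; symmetry then makes `{φ = 0}` null, and the weights at levels `0` and
`λ` agree a.e.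
-/

noncomputable def thresholdWeight {X : Type*} (φ g : X → ℝ) (t : ℝ) (x : X) : ℝ :=
  Set.indicator {x | t < φ x} (fun _ => (1:ℝ)) x
    + g x * Set.indicator {x | φ x = t} (fun _ => (1:ℝ)) x

section

variable {X : Type*} {φ g : X → ℝ} {t : ℝ}

lemma thresholdWeight_mem_Icc (hg01 : ∀ x, g x ∈ Set.Icc (0:ℝ) 1) (x : X) :
    thresholdWeight φ g t x ∈ Set.Icc (0:ℝ) 1 := by
  have := hg01 x
  simp only [thresholdWeight, Set.indicator_apply, Set.mem_ofPred_eq, Set.mem_Icc] at this ⊢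
  split_ifs <;> grind

lemma indicator_pos_sub_thresholdWeight (ht : 0 < t) (x : X) :
    Set.indicator {x | 0 < φ x} (fun _ => (1:ℝ)) x - thresholdWeight φ g t x
      = Set.indicator {x | 0 < φ x ∧ φ x < t} (fun _ => (1:ℝ)) x
        + (1 - g x) * Set.indicator {x | φ x = t} (fun _ => (1:ℝ)) x := by
  simp only [thresholdWeight, Set.indicator_apply, Set.mem_ofPred_eq]
  split_ifs <;> grind

variable [MeasurableSpace X] {μ : Measure X}

lemma measure_neg_eq_measure_pos_of_map_neg_eq [InvolutiveNeg X] [MeasurableNeg X]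
    (hμ : μ.map Neg.neg = μ) (hφ : Measurable φ) (hodd : ∀ x, φ (-x) = -φ x) :
    μ {x | φ x < 0} = μ {x | 0 < φ x} := by
  conv_rhs => rw [← hμ]
  rw [Measure.map_apply measurable_neg (measurableSet_lt measurable_const hφ)]
  congr 1
  ext x
  simp [hodd]

lemma measureReal_neg_add_measureReal_pos [IsFiniteMeasure μ] (hφ : Measurable φ) :
    μ.real {x | φ x < 0} + μ.real {x | 0 < φ x} = μ.real {x | φ x = 0}ᶜ := by
  have hdisj : Disjoint {x | φ x < 0} {x | 0 < φ x} :=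
    Set.disjoint_left.2 fun x (hneg : φ x < 0) (hpos : 0 < φ x) => (lt_asymm hneg hpos).elim
  have hcompl : {x | φ x = 0}ᶜ = {x | φ x < 0} ∪ {x | 0 < φ x} := by
    ext x; simp [lt_or_lt_iff_ne]
  rw [hcompl, measureReal_union hdisj (measurableSet_lt measurable_const hφ)]

variable [IsProbabilityMeasure μ]

lemma measureReal_pos_le_half (hφ : Measurable φ) (hsymm : μ {x | φ x < 0} = μ {x | 0 < φ x}) :
    μ.real {x | 0 < φ x} ≤ 1 / 2 := by
  have hsum := measureReal_neg_add_measureReal_pos (μ := μ) hφ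
  have hle : μ.real {x | φ x = 0}ᶜ ≤ 1 := measureReal_le_one
  rw [measureReal_def, hsymm, ← measureReal_def] at hsum
  linarith

lemma measure_eq_zero_of_measureReal_pos_eq_half (hφ : Measurable φ)
    (hsymm : μ {x | φ x < 0} = μ {x | 0 < φ x}) (hhalf : μ.real {x | 0 < φ x} = 1 / 2) :
    μ {x | φ x = 0} = 0 := by
  have hsum := measureReal_neg_add_measureReal_pos (μ := μ) hφ
  rw [measureReal_def, hsymm, ← measureReal_def, hhalf,
    measureReal_compl (measurableSet_eq_fun hφ measurable_const), probReal_univ] at hsum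
  exact (measureReal_eq_zero_iff).1 (by linarith)

lemma integrable_thresholdWeight (hφ : Measurable φ) (hg : Measurable g)
    (hg01 : ∀ x, g x ∈ Set.Icc (0:ℝ) 1) : Integrable (thresholdWeight φ g t) μ := by
  have hmeas : Measurable (thresholdWeight φ g t) :=
    (measurable_const.indicator (measurableSet_lt measurable_const hφ)).add
      (hg.mul (measurable_const.indicator (measurableSet_eq_fun hφ measurable_const)))
  refine .of_bound hmeas.aestronglyMeasurable 1 (.of_forall fun x => ?_)
  obtain ⟨h0, h1⟩ := thresholdWeight_mem_Icc (φ := φ) (t := t) hg01 x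
  rwa [Real.norm_eq_abs, abs_of_nonneg h0]

lemma ae_eq_zero_of_integral_thresholdWeight_eq_half (hφ : Measurable φ)
    (hsymm : μ {x | φ x < 0} = μ {x | 0 < φ x}) (hg : Measurable g)
    (hg01 : ∀ x, g x ∈ Set.Icc (0:ℝ) 1) (ht : 0 < t)
    (hmass : ∫ x, thresholdWeight φ g t x ∂μ = 1 / 2) :
    μ.real {x | 0 < φ x} = 1 / 2 ∧
      ∀ᵐ x ∂μ, Set.indicator {x | 0 < φ x ∧ φ x < t} (fun _ => (1:ℝ)) x = 0 ∧
        (1 - g x) * Set.indicator {x | φ x = t} (fun _ => (1:ℝ)) x = 0 := by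
  have hpos : MeasurableSet {x | 0 < φ x} := measurableSet_lt measurable_const hφ
  have hgap_nonneg (x : X) : 0 ≤ Set.indicator {x | 0 < φ x ∧ φ x < t} (fun _ => (1:ℝ)) x ∧
      0 ≤ (1 - g x) * Set.indicator {x | φ x = t} (fun _ => (1:ℝ)) x :=
    ⟨Set.indicator_nonneg (fun _ _ => zero_le_one) x,
      mul_nonneg (sub_nonneg.2 (hg01 x).2) (Set.indicator_nonneg (fun _ _ => zero_le_one) x)⟩
  have hnonneg : 0 ≤ fun x => Set.indicator {x | 0 < φ x} (fun _ => (1:ℝ)) x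
      - thresholdWeight φ g t x := fun x => by
    simp only [Pi.zero_apply, indicator_pos_sub_thresholdWeight ht]
    exact add_nonneg (hgap_nonneg x).1 (hgap_nonneg x).2
  have hind : Integrable (Set.indicator {x | 0 < φ x} fun _ => (1:ℝ)) μ :=
    (integrable_const 1).indicator hpos
  have hw := integrable_thresholdWeight (μ := μ) (t := t) hφ hg hg01
  have hintegral : ∫ x, (Set.indicator {x | 0 < φ x} (fun _ => (1:ℝ)) x
      - thresholdWeight φ g t x) ∂μ = μ.real {x | 0 < φ x} - 1 / 2 := by
    rw [integral_sub hind hw, hmass, integral_indicator_const _ hpos, smul_eq_mul, mul_one]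
  have hle := measureReal_pos_le_half hφ hsymm
  have hge : 0 ≤ μ.real {x | 0 < φ x} - 1 / 2 := hintegral ▸ integral_nonneg hnonneg
  have hdiff := (integral_eq_zero_iff_of_nonneg hnonneg (hind.sub hw)).1 (by linarith)
  refine ⟨by linarith, hdiff.mono fun x hx => ?_⟩
  simp only [Pi.zero_apply, indicator_pos_sub_thresholdWeight ht] at hx
  exact (add_eq_zero_iff_of_nonneg (hgap_nonneg x).1 (hgap_nonneg x).2).1 hx

theorem thresholdWeight_ae_eq_of_integral_eq_half (hφ : Measurable φ)
    (hsymm : μ {x | φ x < 0} = μ {x | 0 < φ x}) (hg : Measurable g)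
    (hg01 : ∀ x, g x ∈ Set.Icc (0:ℝ) 1) (ht : 0 < t)
    (hmass : ∫ x, thresholdWeight φ g t x ∂μ = 1 / 2) :
    μ {x | 0 < φ x ∧ φ x < t} = 0 ∧
      (∫ x, (1 - g x) * Set.indicator {x | φ x = t} (fun _ => (1:ℝ)) x ∂μ) = 0 ∧
      μ {x | φ x = 0} = 0 ∧
      thresholdWeight φ g 0 =ᵐ[μ] thresholdWeight φ g t := by
  obtain ⟨hhalf, hgap⟩ := ae_eq_zero_of_integral_thresholdWeight_eq_half hφ hsymm hg hg01 ht hmass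
  have hzero := measure_eq_zero_of_measureReal_pos_eq_half hφ hsymm hhalf
  refine ⟨?_, integral_eq_zero_of_ae (hgap.mono fun x hx => hx.2), hzero, ?_⟩
  · rw [measure_eq_zero_iff_ae_notMem]
    filter_upwards [hgap] with x hx
    simpa using hx.1
  · filter_upwards [hgap, measure_eq_zero_iff_ae_notMem.1 hzero] with x hx hx0
    have hsplit := indicator_pos_sub_thresholdWeight (φ := φ) (g := g) ht x
    rw [hx.1, hx.2, add_zero, sub_eq_zero] at hsplit
    rw [← hsplit, thresholdWeight, Set.indicator_of_notMem (s := {x | φ x = 0}) hx0, mul_zero,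
      add_zero]

end

theorem stmt2_general (μ : Measure (EuclideanSpace ℝ (Fin 3))) [IsProbabilityMeasure μ]
    (hsymm : Measure.map (fun n => -n) μ = μ)
    (n₀ : EuclideanSpace ℝ (Fin 3))
    (g : EuclideanSpace ℝ (Fin 3) → ℝ) (hg : Measurable g) (hg01 : ∀ n, g n ∈ Set.Icc (0:ℝ) 1)
    (lam : ℝ) (hlam : lam ∈ Set.Ioc (0:ℝ) 1)
    (hmass : ∫ n, (Set.indicator {n | lam < ⟪n₀, n⟫} (fun _ => (1:ℝ)) n
        + g n * Set.indicator {n | ⟪n₀, n⟫ = lam} (fun _ => (1:ℝ)) n) ∂μ = 1/2) :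
    μ {n | 0 < ⟪n₀, n⟫ ∧ ⟪n₀, n⟫ < lam} = 0 ∧
    (∫ n, (1 - g n) * Set.indicator {n | ⟪n₀, n⟫ = lam} (fun _ => (1:ℝ)) n ∂μ) = 0 ∧
    (∫ n, g n * Set.indicator {n | ⟪n₀, n⟫ = 0} (fun _ => (1:ℝ)) n ∂μ) = 0 ∧
    (∫ n, (Set.indicator {n | 0 < ⟪n₀, n⟫} (fun _ => (1:ℝ)) n
        + g n * Set.indicator {n | ⟪n₀, n⟫ = 0} (fun _ => (1:ℝ)) n) • n ∂μ)
      = ∫ n, (Set.indicator {n | lam < ⟪n₀, n⟫} (fun _ => (1:ℝ)) n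
        + g n * Set.indicator {n | ⟪n₀, n⟫ = lam} (fun _ => (1:ℝ)) n) • n ∂μ := by
  have hφ : Measurable fun n : EuclideanSpace ℝ (Fin 3) => ⟪n₀, n⟫ :=
    measurable_const.inner measurable_id
  have hodd := measure_neg_eq_measure_pos_of_map_neg_eq hsymm hφ fun n => inner_neg_right n₀ n
  obtain ⟨hgap, htie, hzero, hweight⟩ :=
    thresholdWeight_ae_eq_of_integral_eq_half hφ hodd hg hg01 hlam.1 hmass
  refine ⟨hgap, htie, integral_eq_zero_of_ae ?_, integral_congr_ae ?_⟩
  · filter_upwards [measure_eq_zero_iff_ae_notMem.1 hzero] with n hn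
    simp [hn]
  · filter_upwards [hweight] with n hn
    exact congrArg (· • n) hn

theorem stmt2 (μ : Measure (EuclideanSpace ℝ (Fin 3))) [IsProbabilityMeasure μ]
    (hsphere : ∀ᵐ n ∂μ, ‖n‖ = 1)
    (hsymm : Measure.map (fun n => -n) μ = μ)
    (n₀ : EuclideanSpace ℝ (Fin 3)) (hn₀ : ‖n₀‖ = 1)
    (g : EuclideanSpace ℝ (Fin 3) → ℝ) (hg : Measurable g) (hg01 : ∀ n, g n ∈ Set.Icc (0:ℝ) 1)
    (lam : ℝ) (hlam : lam ∈ Set.Ioc (0:ℝ) 1)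
    (hmass : ∫ n, (Set.indicator {n | lam < ⟪n₀, n⟫} (fun _ => (1:ℝ)) n
        + g n * Set.indicator {n | ⟪n₀, n⟫ = lam} (fun _ => (1:ℝ)) n) ∂μ = 1/2) :
    μ {n | 0 < ⟪n₀, n⟫ ∧ ⟪n₀, n⟫ < lam} = 0 ∧
    (∫ n, (1 - g n) * Set.indicator {n | ⟪n₀, n⟫ = lam} (fun _ => (1:ℝ)) n ∂μ) = 0 ∧
    (∫ n, g n * Set.indicator {n | ⟪n₀, n⟫ = 0} (fun _ => (1:ℝ)) n ∂μ) = 0 ∧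
    (∫ n, (Set.indicator {n | 0 < ⟪n₀, n⟫} (fun _ => (1:ℝ)) n
        + g n * Set.indicator {n | ⟪n₀, n⟫ = 0} (fun _ => (1:ℝ)) n) • n ∂μ)
      = ∫ n, (Set.indicator {n | lam < ⟪n₀, n⟫} (fun _ => (1:ℝ)) n
        + g n * Set.indicator {n | ⟪n₀, n⟫ = lam} (fun _ => (1:ℝ)) n) • n ∂μ :=
  stmt2_general μ hsymm n₀ g hg hg01 lam hlam hmass
end

section
/- Let T be an invertible symmetric 3×3 real matrix, J(n) = N_T/(nᵀT⁻²n)² the normalized density on S², and define b(n₀) = ∫_{S²} J(n) 1_{n₀·n > 0} n dS(n). Then the quantity n₀ᵀ b(n₀) / √(n₀ᵀ T² n₀) is independent of the unit vector n₀ and equals π N_T |det T|. -/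
/-!
Integrate `h x * exp (-‖T⁻¹ x‖ ^ 2)` over `ℝ³`, where `h x = max ⟪n₀, x⟫ 0`, in two ways.
In polar coordinates `x = r • n` the radial integral `∫ r³ exp (-r² a²) dr = 1 / (2 a⁴)`, with
`a = ‖T⁻¹ n‖`, turns it into `1 / 2 * ∫_{S²} h n / ‖T⁻¹ n‖ ^ 4 dS`, which is `⟪n₀, b n₀⟫ / (2 N)`.
The substitution `x = T y` turns it into `|det T| * ∫ max ⟪T n₀, y⟫ 0 * exp (-‖y‖ ^ 2) dy`, and
after rotating `T n₀` onto a coordinate axis this Gaussian integral is `π / 2 * ‖T n₀‖`.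
Finally `√(n₀ᵀ T² n₀) = ‖T n₀‖` for symmetric `T`.
-/

open MeasureTheory Real Set Metric
open scoped RealInnerProductSpace

theorem integrableOn_pow_mul_exp_neg_mul_sq (d : ℕ) {a : ℝ} (ha : 0 < a) :
    IntegrableOn (fun r => r ^ d * exp (-(r * a) ^ 2)) (Ioi 0) := by
  refine (integrableOn_rpow_mul_exp_neg_mul_sq (pow_pos ha 2)
    (by linarith [d.cast_nonneg (α := ℝ)] : (-1 : ℝ) < d)).congr_fun (fun r _ => ?_)
    measurableSet_Ioi
  simp only [rpow_natCast, mul_pow, neg_mul, mul_comm (a ^ 2)]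

theorem integral_Ioi_pow_mul_exp_neg_mul_sq (d : ℕ) {a : ℝ} (ha : 0 < a) :
    ∫ r in Ioi (0 : ℝ), r ^ d * exp (-(r * a) ^ 2) = Gamma ((d + 1) / 2) / (2 * a ^ (d + 1)) := by
  have hpow : (a ^ 2) ^ (-((d : ℝ) + 1) / 2) = (a ^ (d + 1))⁻¹ := by
    rw [← rpow_natCast a 2, ← rpow_mul ha.le, ← rpow_natCast, ← rpow_neg ha.le]
    congr 1
    push_cast
    ring
  have h := integral_rpow_mul_exp_neg_mul_rpow two_pos
    (by linarith [d.cast_nonneg (α := ℝ)] : (-1 : ℝ) < d) (pow_pos ha 2)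
  simp only [rpow_natCast, rpow_two, hpow] at h
  simp only [mul_pow, neg_mul, mul_comm (a ^ 2)] at h ⊢
  rw [h]
  ring

theorem integral_max_mul_exp_neg_sq : ∫ t : ℝ, max t 0 * exp (-t ^ 2) = 1 / 2 := by
  rw [← setIntegral_eq_integral_of_forall_compl_eq_zero (s := Ioi 0)
      fun t ht => by rw [max_eq_right (not_lt.1 ht), zero_mul],
    setIntegral_congr_fun measurableSet_Ioi (g := fun t => t ^ 1 * exp (-(t * 1) ^ 2))
      fun t ht => by simp [max_eq_left (le_of_lt (mem_Ioi.1 ht))],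
    integral_Ioi_pow_mul_exp_neg_mul_sq 1 one_pos]
  norm_num

namespace MeasureTheory.Measure

theorem integral_volumeIoiPow {F : Type*} [NormedAddCommGroup F] [NormedSpace ℝ F]
    (n : ℕ) (φ : ℝ → F) :
    ∫ r, φ r ∂volumeIoiPow n = ∫ r in Ioi (0 : ℝ), r ^ n • φ r := by
  rw [volumeIoiPow, integral_withDensity_eq_integral_toReal_smul (by fun_prop)
      (.of_forall fun _ => ENNReal.ofReal_lt_top),
    integral_subtype_comap measurableSet_Ioi (fun r => (ENNReal.ofReal (r ^ n)).toReal • φ r)]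
  refine setIntegral_congr_fun measurableSet_Ioi fun r hr => ?_
  rw [ENNReal.toReal_ofReal (pow_nonneg (le_of_lt hr) n)]

theorem integrable_volumeIoiPow_iff {F : Type*} [NormedAddCommGroup F] [NormedSpace ℝ F]
    (n : ℕ) (φ : ℝ → F) :
    Integrable (fun r : Ioi (0 : ℝ) => φ r) (volumeIoiPow n) ↔
      IntegrableOn (fun r => r ^ n • φ r) (Ioi 0) := by
  rw [volumeIoiPow, integrable_withDensity_iff_integrable_smul' (by fun_prop)
      (.of_forall fun _ => ENNReal.ofReal_lt_top), IntegrableOn,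
    ← map_comap_subtype_coe measurableSet_Ioi,
    (MeasurableEmbedding.subtype_coe measurableSet_Ioi).integrable_map_iff]
  refine integrable_congr (.of_forall fun r => ?_)
  simp [ENNReal.toReal_ofReal (pow_nonneg (le_of_lt r.2) n)]

end MeasureTheory.Measure

section Polar

variable {E F : Type*} [NormedAddCommGroup E] [NormedSpace ℝ E] [NormedAddCommGroup F]
  [NormedSpace ℝ F]

theorem norm_pos_of_injective_of_mem_sphere {A : E →ₗ[ℝ] F} (hA : Function.Injective A)
    (x : sphere (0 : E) 1) : 0 < ‖A x‖ :=
  norm_pos_iff.2 ((map_ne_zero_iff A hA).2 (ne_zero_of_mem_unit_sphere x))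

variable [FiniteDimensional ℝ E] [Nontrivial E]

local notation "dim" => Module.finrank ℝ E

theorem integral_eq_integral_toSphere_prod [MeasurableSpace E] [BorelSpace E] (μ : Measure E)
    [μ.IsAddHaarMeasure] (f : E → F) :
    ∫ x, f x ∂μ = ∫ p : sphere (0 : E) 1 × Ioi (0 : ℝ), f (p.2.1 • p.1.1)
      ∂μ.toSphere.prod (Measure.volumeIoiPow (dim - 1)) := by
  have hpolar (x : ({0}ᶜ : Set E)) :
      f (((homeomorphUnitSphereProd E) x).2.1 • ((homeomorphUnitSphereProd E) x).1.1) = f x := by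
    simp [smul_inv_smul₀ (norm_ne_zero_iff.2 x.2)]
  rw [← μ.measurePreserving_homeomorphUnitSphereProd.integral_comp
    (Homeomorph.measurableEmbedding _), funext hpolar,
    integral_subtype_comap (measurableSet_singleton _).compl f, restrict_compl_singleton]

section Homogeneous

variable {h : E → ℝ} (hh : ∀ r : ℝ, 0 < r → ∀ x, h (r • x) = r * h x) {A : E →ₗ[ℝ] F}
include hh

theorem pow_pred_smul_mul_exp_neg_norm_sq (x : E) {r : ℝ} (hr : 0 < r) :
    r ^ (dim - 1) • (h (r • x) * exp (-‖A (r • x)‖ ^ 2)) =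
      h x * (r ^ dim * exp (-(r * ‖A x‖) ^ 2)) := by
  rw [smul_eq_mul, hh r hr, map_smul, norm_smul, norm_of_nonneg hr.le,
    ← pow_sub_one_mul Module.finrank_pos.ne']
  ring

variable (hA : Function.Injective A)
include hA

theorem integrable_volumeIoiPow_mul_exp_neg_norm_sq (x : sphere (0 : E) 1) :
    Integrable (fun r : Ioi (0 : ℝ) => h (r.1 • x.1) * exp (-‖A (r.1 • x.1)‖ ^ 2))
      (Measure.volumeIoiPow (dim - 1)) := by
  rw [Measure.integrable_volumeIoiPow_iff _ fun r => h (r • x.1) * exp (-‖A (r • x.1)‖ ^ 2)]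
  refine IntegrableOn.congr_fun ?_ (fun r hr => (pow_pred_smul_mul_exp_neg_norm_sq hh x hr).symm)
    measurableSet_Ioi
  exact (integrableOn_pow_mul_exp_neg_mul_sq dim
    (norm_pos_of_injective_of_mem_sphere hA x)).const_mul (h x)

theorem integral_volumeIoiPow_mul_exp_neg_norm_sq (x : sphere (0 : E) 1) :
    ∫ r, h (r.1 • x.1) * exp (-‖A (r.1 • x.1)‖ ^ 2) ∂Measure.volumeIoiPow (dim - 1) =
      Gamma ((dim + 1) / 2) / 2 * (h x / ‖A x‖ ^ (dim + 1)) := by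
  rw [Measure.integral_volumeIoiPow _ fun r => h (r • x.1) * exp (-‖A (r • x.1)‖ ^ 2),
    setIntegral_congr_fun measurableSet_Ioi fun r hr => pow_pred_smul_mul_exp_neg_norm_sq hh x hr,
    integral_const_mul,
    integral_Ioi_pow_mul_exp_neg_mul_sq dim (norm_pos_of_injective_of_mem_sphere hA x)]
  ring

end Homogeneous

theorem integral_mul_exp_neg_norm_sq_eq_integral_toSphere [MeasurableSpace E] [BorelSpace E]
    (μ : Measure E) [μ.IsAddHaarMeasure] {h : E → ℝ} (hcont : Continuous h)
    (hh : ∀ r : ℝ, 0 < r → ∀ x, h (r • x) = r * h x) {A : E →ₗ[ℝ] F}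
    (hA : Function.Injective A) :
    ∫ x, h x * exp (-‖A x‖ ^ 2) ∂μ =
      Gamma ((dim + 1) / 2) / 2 * ∫ x, h x / ‖A x‖ ^ (dim + 1) ∂μ.toSphere := by
  have hAc : Continuous A := A.continuous_of_finiteDimensional
  have habs (r : ℝ) (hr : 0 < r) (x : E) : |h (r • x)| = r * |h x| := by
    rw [hh r hr, abs_mul, abs_of_pos hr]
  have hint : Integrable (fun p : sphere (0 : E) 1 × Ioi (0 : ℝ) =>
      h (p.2.1 • p.1.1) * exp (-‖A (p.2.1 • p.1.1)‖ ^ 2))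
      (μ.toSphere.prod (Measure.volumeIoiPow (dim - 1))) := by
    refine (integrable_prod_iff (by fun_prop : Continuous _).aestronglyMeasurable).2
      ⟨.of_forall (integrable_volumeIoiPow_mul_exp_neg_norm_sq hh hA), ?_⟩
    simp only [norm_mul, norm_eq_abs, abs_exp]
    simp only [integral_volumeIoiPow_mul_exp_neg_norm_sq (h := fun x => |h x|) habs hA]
    refine Continuous.integrable_of_hasCompactSupport ?_ (.of_compactSpace _)
    exact continuous_const.mul ((hcont.comp continuous_subtype_val).abs.div (by fun_prop)
      fun x => (pow_pos (norm_pos_of_injective_of_mem_sphere hA x) _).ne')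
  rw [integral_eq_integral_toSphere_prod μ, integral_prod _ hint, ← integral_const_mul]
  exact integral_congr_ae (.of_forall (integral_volumeIoiPow_mul_exp_neg_norm_sq hh hA))

end Polar

theorem integral_eq_abs_det_mul_integral_comp {E F : Type*} [NormedAddCommGroup E]
    [NormedSpace ℝ E] [FiniteDimensional ℝ E] [MeasurableSpace E] [BorelSpace E]
    [NormedAddCommGroup F] [NormedSpace ℝ F] (μ : Measure E) [μ.IsAddHaarMeasure]
    (L : E ≃ₗ[ℝ] E) (g : E → F) :
    ∫ x, g x ∂μ = |LinearMap.det L.toLinearMap| • ∫ y, g (L y) ∂μ := by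
  have hdet : LinearMap.det L.toLinearMap ≠ 0 := L.isUnit_det'.ne_zero
  rw [show ∫ y, g (L y) ∂μ = ∫ x, g x ∂μ.map L.toLinearMap from
      (integral_map_equiv L.toContinuousLinearEquiv.toHomeomorph.toMeasurableEquiv g).symm,
    μ.map_linearMap_addHaar_eq_smul_addHaar hdet, integral_smul_measure,
    ENNReal.toReal_ofReal (abs_nonneg _), smul_smul, abs_inv,
    mul_inv_cancel₀ (abs_ne_zero.2 hdet), one_smul]

theorem EuclideanSpace.integral_max_inner_single_mul_exp_neg_norm_sq (n : ℕ) :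
    ∫ x : EuclideanSpace ℝ (Fin (n + 1)),
      max ⟪EuclideanSpace.single 0 1, x⟫ 0 * exp (-‖x‖ ^ 2) = √π ^ n / 2 := by
  let f : Fin (n + 1) → ℝ → ℝ := Fin.cons (fun t => max t 0 * exp (-t ^ 2)) fun _ t => exp (-t ^ 2)
  have hprod (x : Fin (n + 1) → ℝ) :
      max ⟪EuclideanSpace.single 0 1, WithLp.toLp 2 x⟫ 0 * exp (-‖WithLp.toLp 2 x‖ ^ 2) =
        ∏ i, f i (x i) := by
    rw [EuclideanSpace.norm_sq_eq, ← Finset.sum_neg_distrib, exp_sum, Fin.prod_univ_succ]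
    simp [f, Fin.prod_univ_succ, EuclideanSpace.inner_single_left, mul_assoc]
  rw [← (PiLp.volume_preserving_toLp (Fin (n + 1))).integral_comp
      (MeasurableEquiv.toLp 2 _).measurableEmbedding, funext hprod,
    integral_fintype_prod_volume_eq_prod, Fin.prod_univ_succ]
  have hgauss : ∫ t : ℝ, exp (-t ^ 2) = √π := by simpa using integral_gaussian 1
  simp [f, integral_max_mul_exp_neg_sq, hgauss]
  ring

theorem EuclideanSpace.integral_max_inner_mul_exp_neg_norm_sq {n : ℕ}
    (v : EuclideanSpace ℝ (Fin (n + 1))) :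
    ∫ x, max ⟪v, x⟫ 0 * exp (-‖x‖ ^ 2) = √π ^ n / 2 * ‖v‖ := by
  set e : EuclideanSpace ℝ (Fin (n + 1)) := ‖v‖ • EuclideanSpace.single 0 1
  have he : ‖e‖ = ‖v‖ := by simp [e, norm_smul]
  set R := Submodule.reflection (ℝ ∙ (e - v))ᗮ
  have hRe : R e = v := Submodule.reflection_sub he
  have hRx (x : EuclideanSpace ℝ (Fin (n + 1))) :
      max ⟪v, R x⟫ 0 * exp (-‖R x‖ ^ 2) =
        ‖v‖ * (max ⟪EuclideanSpace.single 0 1, x⟫ 0 * exp (-‖x‖ ^ 2)) := by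
    have hinner : ⟪v, R x⟫ = ‖v‖ * ⟪EuclideanSpace.single 0 1, x⟫ := by
      rw [← real_inner_smul_left, ← R.inner_map_map e x, hRe]
    rw [hinner, R.norm_map, ← mul_assoc, mul_max_of_nonneg _ _ (norm_nonneg v), mul_zero]
  rw [← R.measurePreserving.integral_comp R.toHomeomorph.measurableEmbedding, funext hRx,
    integral_const_mul, integral_max_inner_single_mul_exp_neg_norm_sq]
  ring

theorem EuclideanSpace.integral_toSphere_max_inner_div_norm_symm_pow {n : ℕ}
    (L : EuclideanSpace ℝ (Fin (n + 1)) ≃ₗ[ℝ] EuclideanSpace ℝ (Fin (n + 1)))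
    (u : EuclideanSpace ℝ (Fin (n + 1))) :
    ∫ x, max ⟪u, x.1⟫ 0 / ‖L.symm x.1‖ ^ (n + 2) ∂volume.toSphere =
      √π ^ n / Gamma ((n + 2) / 2) * |LinearMap.det L.toLinearMap| *
        ‖LinearMap.adjoint L.toLinearMap u‖ := by
  have hhom (r : ℝ) (hr : 0 < r) (x : EuclideanSpace ℝ (Fin (n + 1))) :
      max ⟪u, r • x⟫ 0 = r * max ⟪u, x⟫ 0 := by
    rw [real_inner_smul_right, mul_max_of_nonneg _ _ hr.le, mul_zero]
  have hpolar := integral_mul_exp_neg_norm_sq_eq_integral_toSphere volume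
    (h := fun x => max ⟪u, x⟫ 0) (by fun_prop) hhom (A := L.symm.toLinearMap) L.symm.injective
  have hcov := integral_eq_abs_det_mul_integral_comp volume L
    fun x => max ⟪u, x⟫ 0 * exp (-‖L.symm x‖ ^ 2)
  have hadj (y : EuclideanSpace ℝ (Fin (n + 1))) :
      ⟪u, L y⟫ = ⟪LinearMap.adjoint L.toLinearMap u, y⟫ :=
    (LinearMap.adjoint_inner_left _ _ _).symm
  simp only [LinearEquiv.symm_apply_apply, hadj, integral_max_inner_mul_exp_neg_norm_sq,
    smul_eq_mul] at hcov
  simp only [finrank_euclideanSpace_fin, LinearEquiv.coe_coe, hcov] at hpolar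
  rw [show ((n + 1 : ℕ) : ℝ) + 1 = n + 2 by push_cast; ring] at hpolar
  have hΓ : 0 < Gamma ((n + 2) / 2) := Gamma_pos_of_pos (by positivity)
  field_simp at hpolar ⊢
  linarith

theorem inner_integral_indicator_smul_eq_integral_mul_max {E : Type*} [NormedAddCommGroup E]
    [InnerProductSpace ℝ E] [FiniteDimensional ℝ E] [MeasurableSpace E] [BorelSpace E]
    {ν : Measure (sphere (0 : E) 1)} {f : sphere (0 : E) 1 → ℝ} (hf : Integrable f ν) (u : E) :
    ⟪u, ∫ x, ({p : sphere (0 : E) 1 | 0 < ⟪u, p.1⟫}.indicator f x) • x.1 ∂ν⟫ =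
      ∫ x, f x * max ⟪u, x.1⟫ 0 ∂ν := by
  set S := {p : sphere (0 : E) 1 | 0 < ⟪u, p.1⟫}
  have hS : MeasurableSet S := (isOpen_lt continuous_const (by fun_prop)).measurableSet
  have hint : Integrable (fun x => S.indicator f x • x.1) ν := by
    refine (hf.indicator hS).norm.mono'
      ((hf.indicator hS).aestronglyMeasurable.smul continuous_subtype_val.aestronglyMeasurable)
      (.of_forall fun x => ?_)
    rw [norm_smul, norm_eq_of_mem_sphere, mul_one]
  rw [← integral_inner hint]
  refine integral_congr_ae (.of_forall fun x => ?_)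
  simp only [real_inner_smul_right, Set.indicator_apply, S, Set.mem_ofPred_eq]
  split_ifs with hx
  · rw [max_eq_left hx.le]
  · rw [max_eq_right (not_lt.1 hx), zero_mul, mul_zero]

theorem Matrix.IsSymm.inner_toEuclideanLin_mul_self {ι : Type*} [Fintype ι] [DecidableEq ι]
    {S : Matrix ι ι ℝ} (hS : S.IsSymm) (x : EuclideanSpace ℝ ι) :
    ⟪x, toEuclideanLin (S * S) x⟫ = ‖toEuclideanLin S x‖ ^ 2 := by
  have hsymm := Matrix.isSymmetric_toEuclideanLin_iff.2 (Matrix.isHermitian_iff_isSymm.2 hS)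
  rw [Matrix.toLpLin_mul_same, LinearMap.comp_apply, ← hsymm, real_inner_self_eq_norm_sq]

theorem stmt8_general (T : Matrix (Fin 3) (Fin 3) ℝ) (hT : IsUnit T.det) (hTsymm : T.IsSymm)
    (N : ℝ)
    (J : Metric.sphere (0 : EuclideanSpace ℝ (Fin 3)) 1 → ℝ)
    (hJ : ∀ n, J n = N / (⟪(n : EuclideanSpace ℝ (Fin 3)),
        Matrix.toEuclideanLin (T⁻¹ * T⁻¹) (n : EuclideanSpace ℝ (Fin 3))⟫)^2)
    (hnorm : ∫ n, J n ∂(volume : Measure (EuclideanSpace ℝ (Fin 3))).toSphere = 1)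
    (b : Metric.sphere (0 : EuclideanSpace ℝ (Fin 3)) 1 → EuclideanSpace ℝ (Fin 3))
    (hb : ∀ n₀, b n₀ = ∫ n, (Set.indicator
          {p : Metric.sphere (0 : EuclideanSpace ℝ (Fin 3)) 1 |
            0 < ⟪(n₀ : EuclideanSpace ℝ (Fin 3)), (p : EuclideanSpace ℝ (Fin 3))⟫}
          J n) • (n : EuclideanSpace ℝ (Fin 3))
        ∂(volume : Measure (EuclideanSpace ℝ (Fin 3))).toSphere) :
    ∀ n₀ : Metric.sphere (0 : EuclideanSpace ℝ (Fin 3)) 1,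
      ⟪(n₀ : EuclideanSpace ℝ (Fin 3)), b n₀⟫ /
        Real.sqrt (⟪(n₀ : EuclideanSpace ℝ (Fin 3)),
          Matrix.toEuclideanLin (T * T) (n₀ : EuclideanSpace ℝ (Fin 3))⟫)
      = Real.pi * N * |T.det| := by
  intro n₀
  have hJint : Integrable J (volume : Measure (EuclideanSpace ℝ (Fin 3))).toSphere :=
    .of_integral_ne_zero (by rw [hnorm]; exact one_ne_zero)
  let L := (Matrix.toEuclideanLin T).equivOfDetNeZero (by simpa using hT.ne_zero)
  have hLsymm (x : EuclideanSpace ℝ (Fin 3)) : L.symm x = Matrix.toEuclideanLin T⁻¹ x := by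
    rw [L.symm_apply_eq]
    show x = Matrix.toEuclideanLin T (Matrix.toEuclideanLin T⁻¹ x)
    rw [← LinearMap.comp_apply, ← Matrix.toLpLin_mul_same, Matrix.mul_nonsing_inv T hT,
      Matrix.toLpLin_one, LinearMap.id_apply]
  have hJ' (n : Metric.sphere (0 : EuclideanSpace ℝ (Fin 3)) 1) :
      J n * max ⟪n₀.1, n.1⟫ 0 = N * (max ⟪n₀.1, n.1⟫ 0 / ‖L.symm n.1‖ ^ (2 + 2)) := by
    rw [hJ, hTsymm.inv.inner_toEuclideanLin_mul_self, hLsymm]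
    ring
  have hadj : LinearMap.adjoint L.toLinearMap = Matrix.toEuclideanLin T := by
    rw [← (Matrix.isHermitian_iff_isSymm.2 hTsymm).eq]
    exact (Matrix.toEuclideanLin_conjTranspose_eq_adjoint T).symm
  rw [hb, inner_integral_indicator_smul_eq_integral_mul_max hJint, funext hJ', integral_const_mul,
    EuclideanSpace.integral_toSphere_max_inner_div_norm_symm_pow (n := 2), hadj,
    hTsymm.inner_toEuclideanLin_mul_self, sqrt_sq (norm_nonneg _)]
  have hdet : LinearMap.det L.toLinearMap = T.det := LinearMap.det_toLpLin 2 T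
  have hTn₀ : ‖Matrix.toEuclideanLin T n₀‖ ≠ 0 :=
    norm_ne_zero_iff.2 (L.map_ne_zero_iff.2 (ne_zero_of_mem_unit_sphere n₀))
  rw [hdet, show ((2 : ℕ) + 2 : ℝ) / 2 = 2 by norm_num, Gamma_two, sq_sqrt pi_pos.le]
  field_simp

theorem stmt8 (T : Matrix (Fin 3) (Fin 3) ℝ) (hT : IsUnit T.det) (hTsymm : T.IsSymm)
    (N : ℝ) (hN : 0 < N)
    (J : Metric.sphere (0 : EuclideanSpace ℝ (Fin 3)) 1 → ℝ)
    (hJ : ∀ n, J n = N / (⟪(n : EuclideanSpace ℝ (Fin 3)),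
        Matrix.toEuclideanLin (T⁻¹ * T⁻¹) (n : EuclideanSpace ℝ (Fin 3))⟫)^2)
    (hnorm : ∫ n, J n ∂(volume : Measure (EuclideanSpace ℝ (Fin 3))).toSphere = 1)
    (b : Metric.sphere (0 : EuclideanSpace ℝ (Fin 3)) 1 → EuclideanSpace ℝ (Fin 3))
    (hb : ∀ n₀, b n₀ = ∫ n, (Set.indicator
          {p : Metric.sphere (0 : EuclideanSpace ℝ (Fin 3)) 1 |
            0 < ⟪(n₀ : EuclideanSpace ℝ (Fin 3)), (p : EuclideanSpace ℝ (Fin 3))⟫}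
          J n) • (n : EuclideanSpace ℝ (Fin 3))
        ∂(volume : Measure (EuclideanSpace ℝ (Fin 3))).toSphere) :
    ∀ n₀ : Metric.sphere (0 : EuclideanSpace ℝ (Fin 3)) 1,
      ⟪(n₀ : EuclideanSpace ℝ (Fin 3)), b n₀⟫ /
        Real.sqrt (⟪(n₀ : EuclideanSpace ℝ (Fin 3)),
          Matrix.toEuclideanLin (T * T) (n₀ : EuclideanSpace ℝ (Fin 3))⟫)
      = Real.pi * N * |T.det| :=
  stmt8_general T hT hTsymm N J hJ hnorm b hb
end
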